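/- arXiv:2204.00736 — 5 statements merged into one kernel-verified Lean document; each statement's English description precedes it below -/
import Mathlib

section
/- (Sylvester's determinant identity / Desnanot–Jacobi.) Let A be an N×N matrix over a commutative ring with N ≥ 2, and let i < j and k < l be indices in {1, …, N}. Then det(A) · det(A_{ij|kl}) = det(A_{i|k}) · det(A_{j|l}) − det(A_{i|l}) · det(A_{j|k}). -/
/-- The strictly monotone embedding `Fin n → Fin (n+2)` whose image omits the two
indices `k` and `l`, provided `k < l`.  (For `r < k` it is `r`, for
`k ≤ r < l - 1` it is `r + 1`, and otherwise it is `r + 2`.) -/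
def skipTwo {n : ℕ} (k l : Fin (n + 2)) : Fin n → Fin (n + 2) :=
  fun r =>
    if r.1 < k.1 then ⟨r.1, Nat.lt_succ_of_lt (Nat.lt_succ_of_lt r.isLt)⟩
    else if r.1 + 1 < l.1 then ⟨r.1 + 1, Nat.succ_lt_succ (Nat.lt_succ_of_lt r.isLt)⟩
    else ⟨r.1 + 2, Nat.succ_lt_succ (Nat.succ_lt_succ r.isLt)⟩

open Matrix Finset Equiv

open Matrix Finset Equiv

private lemma det_one_updateCol_updateCol {R : Type*} [CommRing R] {m : ℕ}
    (k l : Fin m) (hkl : k ≠ l) (u v : Fin m → R) :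
    (((1 : Matrix (Fin m) (Fin m) R).updateCol k u).updateCol l v).det
      = u k * v l - u l * v k := by
  set M := ((1 : Matrix (Fin m) (Fin m) R).updateCol k u).updateCol l v with hM
  have hMapp : ∀ p q, M p q = if q = l then v p else if q = k then u p
      else (1 : Matrix (Fin m) (Fin m) R) p q := by
    intro p q
    simp [hM, Matrix.updateCol_apply]
  have hne : (1 : Equiv.Perm (Fin m)) ≠ Equiv.swap k l := by
    intro h
    have := (Equiv.ext_iff.mp h) k
    simp only [Perm.one_apply, Equiv.swap_apply_left] at this
    exact hkl this
  have hprod : ∀ σ : Equiv.Perm (Fin m), σ ≠ 1 → σ ≠ Equiv.swap k l →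
      ∏ x, M (σ x) x = 0 := by
    intro σ h1 h2
    obtain ⟨q, hq1, hq2, hq3⟩ : ∃ q, q ≠ k ∧ q ≠ l ∧ σ q ≠ q := by
      by_contra hc
      push_neg at hc
      have hAk : σ k = k ∨ σ k = l := by
        by_contra hd
        push_neg at hd
        exact hd.1 (σ.injective (hc (σ k) hd.1 hd.2))
      have hAl : σ l = k ∨ σ l = l := by
        by_contra hd
        push_neg at hd
        exact hd.2 (σ.injective (hc (σ l) hd.1 hd.2))
      rcases hAk with e1 | e1
      · have e2 : σ l = l := by
          rcases hAl with e2 | e2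
          · exact absurd (σ.injective (e2.trans e1.symm)) (Ne.symm hkl)
          · exact e2
        exact h1 (Equiv.ext fun q => by
          rcases eq_or_ne q k with rfl | hq1
          · simpa using e1
          · rcases eq_or_ne q l with rfl | hq2
            · simpa using e2
            · simpa using hc q hq1 hq2)
      · have e2 : σ l = k := by
          rcases hAl with e2 | e2
          · exact e2
          · exact absurd (σ.injective (e1.trans e2.symm)) hkl
        exact h2 (Equiv.ext fun q => by
          rcases eq_or_ne q k with rfl | hq1
          · rw [Equiv.swap_apply_left]; exact e1
          · rcases eq_or_ne q l with rfl | hq2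
            · rw [Equiv.swap_apply_right]; exact e2
            · rw [Equiv.swap_apply_of_ne_of_ne hq1 hq2]; exact hc q hq1 hq2)
    refine Finset.prod_eq_zero (Finset.mem_univ q) ?_
    rw [hMapp, if_neg hq2, if_neg hq1]
    exact Matrix.one_apply_ne hq3
  rw [Matrix.det_apply']
  rw [← Finset.sum_subset
    (Finset.subset_univ ({1, Equiv.swap k l} : Finset (Equiv.Perm (Fin m)))) ?_]
  · rw [Finset.sum_pair hne]
    have t1 : ∏ x, M ((1 : Equiv.Perm (Fin m)) x) x = u k * v l := by
      simp only [Perm.one_apply]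
      rw [← Finset.mul_prod_erase _ _ (Finset.mem_univ k),
          ← Finset.mul_prod_erase _ _
            (Finset.mem_erase.mpr ⟨Ne.symm hkl, Finset.mem_univ l⟩),
          Finset.prod_eq_one, hMapp, hMapp]
      · rw [if_neg hkl, if_pos rfl, if_pos rfl, mul_one]
      · intro x hx
        simp only [Finset.mem_erase] at hx
        rw [hMapp, if_neg hx.1, if_neg hx.2.1, Matrix.one_apply_eq]
    have t2 : ∏ x, M (Equiv.swap k l x) x = u l * v k := by
      rw [← Finset.mul_prod_erase _ _ (Finset.mem_univ k),
          ← Finset.mul_prod_erase _ _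
            (Finset.mem_erase.mpr ⟨Ne.symm hkl, Finset.mem_univ l⟩),
          Finset.prod_eq_one, Equiv.swap_apply_left, Equiv.swap_apply_right,
          hMapp, hMapp]
      · rw [if_neg hkl, if_pos rfl, if_pos rfl, mul_one]
      · intro x hx
        simp only [Finset.mem_erase] at hx
        rw [Equiv.swap_apply_of_ne_of_ne hx.2.1 hx.1, hMapp,
          if_neg hx.1, if_neg hx.2.1, Matrix.one_apply_eq]
    rw [t1, t2, Equiv.Perm.sign_swap hkl]
    simp
    ring
  · intro σ _ hσ
    simp only [Finset.mem_insert, Finset.mem_singleton] at hσ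
    push_neg at hσ
    rw [hprod σ hσ.1 hσ.2, mul_zero]

private lemma det_updateColumn_single {R : Type*} [CommRing R] {m : ℕ}
    (M : Matrix (Fin (m + 1)) (Fin (m + 1)) R) (c p : Fin (m + 1)) (r : R) :
    (M.updateCol c (Pi.single p r)).det
      = (-1) ^ (p.1 + c.1) * r * (M.submatrix p.succAbove c.succAbove).det := by
  rw [Matrix.det_succ_column _ c]
  rw [Fintype.sum_eq_single p]
  · rw [Matrix.updateCol_self, Pi.single_eq_same,
      Matrix.submatrix_updateCol_succAbove]
  · intro q hq
    rw [Matrix.updateCol_self, Pi.single_eq_of_ne hq, mul_zero, zero_mul]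

private lemma submatrix_updateCol_of_ne {R : Type*} [CommRing R] {m : ℕ}
    (M : Matrix (Fin (m + 1)) (Fin (m + 1)) R) (pr pc c : Fin (m + 1)) (c' : Fin m)
    (hc : pc.succAbove c' = c) (w : Fin (m + 1) → R) :
    (M.updateCol c w).submatrix pr.succAbove pc.succAbove
      = (M.submatrix pr.succAbove pc.succAbove).updateCol c'
          (fun x => w (pr.succAbove x)) := by
  ext x y
  simp only [Matrix.submatrix_apply, Matrix.updateCol_apply]
  by_cases hy : y = c'
  · subst hy
    rw [if_pos rfl, if_pos hc]
  · rw [if_neg hy, if_neg fun h => hy (Fin.succAbove_right_injective (h.trans hc.symm))]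

private lemma succAbove_mk {m : ℕ} (a b : Fin (m + 1)) (h : a < b) (h' : a.1 < m) :
    b.succAbove ⟨a.1, h'⟩ = a := by
  rw [Fin.succAbove_of_castSucc_lt]
  · rfl
  · exact h

private lemma single_comp_succAbove {R : Type*} [CommRing R] {m : ℕ}
    (j i : Fin (m + 1)) (i' : Fin m) (h : j.succAbove i' = i) (r : R) :
    (fun x => (Pi.single i r : Fin (m + 1) → R) (j.succAbove x)) = Pi.single i' r := by
  funext x
  simp only [Pi.single_apply]
  refine if_congr ?_ rfl rfl
  constructor
  · intro hh
    exact Fin.succAbove_right_injective (hh.trans h.symm)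
  · rintro rfl
    exact h

private lemma skipTwo_eq_comp {n : ℕ} (i j : Fin (n + 2)) (hij : i < j) (i' : Fin (n + 1))
    (h : (i' : ℕ) = (i : ℕ)) :
    j.succAbove ∘ i'.succAbove = skipTwo i j := by
  have hij' : (i : ℕ) < (j : ℕ) := hij
  funext r
  apply Fin.ext
  simp only [Function.comp_apply, skipTwo, Fin.succAbove, Fin.lt_def, Fin.coe_castSucc,
    Fin.val_succ, apply_ite (Fin.val), Fin.castSucc_mk, Fin.succ_mk]
  split_ifs <;> simp_all <;> omega

private lemma key_identity {R : Type*} [CommRing R] {n : ℕ}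
    (A : Matrix (Fin (n + 2)) (Fin (n + 2)) R)
    (i j k l : Fin (n + 2)) (hij : i < j) (hkl : k < l) :
    A.det * ((A.submatrix i.succAbove k.succAbove).det * (A.submatrix j.succAbove l.succAbove).det
        - (A.submatrix i.succAbove l.succAbove).det * (A.submatrix j.succAbove k.succAbove).det)
      = A.det * (A.det * (A.submatrix (skipTwo i j) (skipTwo k l)).det) := by
  have hkl' : k ≠ l := Fin.ne_of_lt hkl
  have hij' : (i : ℕ) < (j : ℕ) := hij
  have hkl'' : (k : ℕ) < (l : ℕ) := hkl
  set u : Fin (n + 2) → R := fun p => adjugate A p i with hu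
  set v : Fin (n + 2) → R := fun p => adjugate A p j with hv
  set B : Matrix (Fin (n + 2)) (Fin (n + 2)) R :=
    ((1 : Matrix (Fin (n + 2)) (Fin (n + 2)) R).updateCol k u).updateCol l v with hB
  have hAB : A * B
      = (A.updateCol k (Pi.single i A.det)).updateCol l (Pi.single j A.det) := by
    ext p q
    rw [Matrix.mul_apply]
    rcases eq_or_ne q l with h | hq1
    · subst h
      have h1 : ∀ r, B r q = adjugate A r j := fun r => Matrix.updateCol_self
      simp only [h1, Matrix.updateCol_self]
      rw [show (∑ r, A p r * adjugate A r j) = (A * adjugate A) p j from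
        (Matrix.mul_apply).symm, Matrix.mul_adjugate, Matrix.smul_apply, Matrix.one_apply,
        smul_eq_mul, Pi.single_apply, mul_ite, mul_one, mul_zero]
    · rcases eq_or_ne q k with h | hq2
      · subst h
        have h1 : ∀ r, B r q = adjugate A r i := fun r => by
            rw [hB, Matrix.updateCol_ne hkl', Matrix.updateCol_self]
        simp only [h1]
        rw [Matrix.updateCol_ne hkl', Matrix.updateCol_self]
        rw [show (∑ r, A p r * adjugate A r i) = (A * adjugate A) p i from
          (Matrix.mul_apply).symm, Matrix.mul_adjugate, Matrix.smul_apply, Matrix.one_apply,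
          smul_eq_mul, Pi.single_apply, mul_ite, mul_one, mul_zero]
      · have h1 : ∀ r, B r q = (1 : Matrix (Fin (n + 2)) (Fin (n + 2)) R) r q := fun r => by
          rw [hB, Matrix.updateCol_ne hq1, Matrix.updateCol_ne hq2]
        simp only [h1]
        rw [show (∑ r, A p r * (1 : Matrix (Fin (n + 2)) (Fin (n + 2)) R) r q)
            = (A * (1 : Matrix (Fin (n + 2)) (Fin (n + 2)) R)) p q
            from (Matrix.mul_apply).symm, Matrix.mul_one,
          Matrix.updateCol_ne hq1, Matrix.updateCol_ne hq2]
  set i' : Fin (n + 1) := ⟨i.1, by omega⟩ with hi'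
  set k' : Fin (n + 1) := ⟨k.1, by omega⟩ with hk'
  have hji' : j.succAbove i' = i := succAbove_mk i j hij (by omega)
  have hlk' : l.succAbove k' = k := succAbove_mk k l hkl (by omega)
  have hABdet : (A * B).det
      = (-1) ^ (j.1 + l.1) * ((-1) ^ (i.1 + k.1)
          * (A.det * (A.det * (A.submatrix (skipTwo i j) (skipTwo k l)).det))) := by
    rw [hAB, det_updateColumn_single,
      submatrix_updateCol_of_ne A j l k k' hlk' (Pi.single i A.det),
      single_comp_succAbove j i i' hji' A.det, det_updateColumn_single,
      Matrix.submatrix_submatrix, skipTwo_eq_comp i j hij i' rfl,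
      skipTwo_eq_comp k l hkl k' rfl]
    have : i'.1 = i.1 := rfl
    have : k'.1 = k.1 := rfl
    ring
  have hBdet : B.det = u k * v l - u l * v k :=
    det_one_updateCol_updateCol k l hkl' u v
  have hmul : A.det * B.det = (A * B).det := (Matrix.det_mul A B).symm
  rw [hBdet, hABdet, hu, hv] at hmul
  simp only [Matrix.adjugate_fin_succ_eq_det_submatrix] at hmul
  set d1 := (A.submatrix i.succAbove k.succAbove).det
  set d2 := (A.submatrix j.succAbove l.succAbove).det
  set d3 := (A.submatrix i.succAbove l.succAbove).det
  set d4 := (A.submatrix j.succAbove k.succAbove).det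
  set c := (A.submatrix (skipTwo i j) (skipTwo k l)).det
  set ε : R := (-1) ^ (i.1 + j.1 + k.1 + l.1) with hε'
  have hε : ε * ε = 1 := by
    rw [hε', ← pow_add, ← two_mul, pow_mul, neg_one_sq, one_pow]
  have s1 : ((-1 : R)) ^ (i.1 + k.1) * (-1) ^ (j.1 + l.1) = ε := by
    rw [hε', ← pow_add]
    congr 1
    omega
  have s2 : ((-1 : R)) ^ (i.1 + l.1) * (-1) ^ (j.1 + k.1) = ε := by
    rw [hε', ← pow_add]
    congr 1
    omega
  have hmul2 : A.det * (ε * (d1 * d2 - d3 * d4)) = ε * (A.det * (A.det * c)) := by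
    linear_combination hmul - A.det * (d1 * d2) * s1 + A.det * (d3 * d4) * s2
      + A.det * (A.det * c) * s1
  calc A.det * (d1 * d2 - d3 * d4)
      = ε * ε * (A.det * (d1 * d2 - d3 * d4)) := by rw [hε, one_mul]
    _ = ε * (A.det * (ε * (d1 * d2 - d3 * d4))) := by ring
    _ = ε * (ε * (A.det * (A.det * c))) := by rw [hmul2]
    _ = (ε * ε) * (A.det * (A.det * c)) := by ring
    _ = A.det * (A.det * c) := by rw [hε, one_mul]

/-- Sylvester's determinant identity / Desnanot–Jacobi.
Let `A` be an `N×N` matrix (`N ≥ 2`) over a commutative ring and let `i < j`, `k < l`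
be row and column indices.  Writing `A.submatrix i.succAbove k.succAbove` for the
matrix obtained by deleting row `i` and column `k`, and
`A.submatrix (skipTwo i j) (skipTwo k l)` for the matrix obtained by deleting rows
`i, j` and columns `k, l`, we have
`det A · det A_{ij|kl} = det A_{i|k} · det A_{j|l} − det A_{i|l} · det A_{j|k}`. -/
theorem sylvester_determinant_identity {R : Type*} [CommRing R] {n : ℕ}
    (A : Matrix (Fin (n + 2)) (Fin (n + 2)) R)
    (i j k l : Fin (n + 2)) (hij : i < j) (hkl : k < l) :
    A.det * (A.submatrix (skipTwo i j) (skipTwo k l)).det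
      = (A.submatrix i.succAbove k.succAbove).det * (A.submatrix j.succAbove l.succAbove).det
        - (A.submatrix i.succAbove l.succAbove).det * (A.submatrix j.succAbove k.succAbove).det := by
  set X : Matrix (Fin (n + 2)) (Fin (n + 2)) (MvPolynomial (Fin (n + 2) × Fin (n + 2)) ℤ) :=
    Matrix.mvPolynomialX (Fin (n + 2)) (Fin (n + 2)) ℤ with hX
  have hXdet : X.det ≠ 0 := Matrix.det_mvPolynomialX_ne_zero (Fin (n + 2)) ℤ
  have hkey := key_identity X i j k l hij hkl
  have hS : X.det * (X.submatrix (skipTwo i j) (skipTwo k l)).det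
      = (X.submatrix i.succAbove k.succAbove).det * (X.submatrix j.succAbove l.succAbove).det
        - (X.submatrix i.succAbove l.succAbove).det * (X.submatrix j.succAbove k.succAbove).det :=
    (mul_left_cancel₀ hXdet hkey).symm
  set φ : MvPolynomial (Fin (n + 2) × Fin (n + 2)) ℤ →+* R :=
    MvPolynomial.eval₂Hom (Int.castRingHom R) (fun p => A p.1 p.2) with hφ
  have hmap : X.map ⇑φ = A := by
    rw [hX, show ⇑φ = MvPolynomial.eval₂ (Int.castRingHom R) (fun p => A p.1 p.2) from rfl]
    exact Matrix.mvPolynomialX_map_eval₂ _ A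
  have h2 := congrArg φ hS
  simp only [_root_.map_mul, map_sub, RingHom.map_det, RingHom.mapMatrix_apply, ← Matrix.submatrix_map, hmap] at h2
  exact h2
end

section
/- (Strong Cauchy interlacing law for tridiagonal matrices.) Let A be an n×n real symmetric tridiagonal matrix with diagonal entries a_1, …, a_n and off-diagonal entries b_1, …, b_{n−1} (so A_{i,i} = a_i, A_{i,i+1} = A_{i+1,i} = b_i, and all other entries are 0). Let λ_1 ≤ λ_2 ≤ ⋯ ≤ λ_n be the eigenvalues of A counted with multiplicity, and let η_1 ≤ ⋯ ≤ η_{n−1} be the eigenvalues of the (n−1)×(n−1) leading principal submatrix of A (rows and columns 1 through n−1), counted with multiplicity. If b_i ≠ 0 for all 1 ≤ i ≤ n−1, then the interlacing is strict: λ_1 < η_1 < λ_2 < η_2 < ⋯ < λ_{n−1} < η_{n−1} < λ_n. -/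
/-!
Let `p k` be the characteristic polynomial of the leading `k × k` submatrix. Expanding the
determinant along the last row and column gives the three-term recurrence
`p (k + 2) = (X - a) * p (k + 1) - b ^ 2 * p k`, where `a` and `b` are the new diagonal and
off-diagonal entries. By induction the roots of `p k` strictly interlace
those of `p (k + 1)`, so `p k` alternates in sign along the roots of `p (k + 1)`, and by the
recurrence so does `p (k + 2) = -b ^ 2 * p k` there, without vanishing since `b ≠ 0`. As
`p (k + 2)` has only real roots, its sign at `t` is `(-1) ^ #{roots above t}`; the alternation then
leaves room for exactly one root of `p (k + 2)` in each gap between consecutive roots of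
`p (k + 1)` and one beyond each end.
-/

open Polynomial Finset Matrix

def StrictlyInterlaces {α : Type*} [Preorder α] {k : ℕ} (ν : Fin k → α)
    (μ : Fin (k + 1) → α) : Prop :=
  ∀ i : Fin k, μ i.castSucc < ν i ∧ ν i < μ i.succ

namespace StrictlyInterlaces

variable {α : Type*} [Preorder α] {k : ℕ} {ν : Fin k → α} {μ : Fin (k + 1) → α}

theorem strictMono_right (h : StrictlyInterlaces ν μ) : StrictMono μ :=
  Fin.strictMono_iff_lt_succ.2 fun i => (h i).1.trans (h i).2

theorem strictMono_left (h : StrictlyInterlaces ν μ) : StrictMono ν :=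
  fun a b hab => ((h a).2.trans_le
    (h.strictMono_right.monotone (Fin.succ_le_castSucc_iff.2 hab))).trans (h b).1

end StrictlyInterlaces

theorem Monotone.lt_apply_iff_sub_card_le {α : Type*} [LinearOrder α] {m : ℕ}
    {ρ : Fin m → α} (hρ : Monotone ρ) {t : α} {j : Fin m} : t < ρ j ↔ m - #{i | t < ρ i} ≤ j := by
  have hcard : #{i | ρ i ≤ t} = m - #{i | t < ρ i} := by
    simp_rw [← not_lt, filter_not, card_sdiff_of_subset (filter_subset _ _), card_univ,
      Fintype.card_fin]
  rw [← not_le, ← Tuple.lt_card_le_iff_apply_le_of_monotone hρ, hcard, not_lt]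

theorem Fin.eq_sub_of_antitone_of_even {l : ℕ} {s : Fin (l + 1) → ℕ} (hs : Antitone s)
    (hpar : ∀ i : Fin (l + 1), Even (s i + (l + 1 - i))) (h0 : s 0 ≤ l + 2) (i : Fin (l + 1)) :
    s i = l + 1 - i := by
  -- parity forces `s` to drop at every step, so `s i + i` is antitone
  have hshift : Antitone fun i : Fin (l + 1) => s i + i := by
    refine Fin.antitone_iff_succ_le.2 fun i => ?_
    have hle := hs (Fin.castSucc_le_succ i)
    obtain ⟨a, ha⟩ := hpar i.succ
    obtain ⟨b, hb⟩ := hpar i.castSucc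
    simp only [Fin.val_succ, Fin.val_castSucc] at ha hb ⊢
    omega
  have hfirst := hshift (Fin.zero_le i)
  have hlast := hshift (Fin.le_last i)
  obtain ⟨a, ha⟩ := hpar 0
  obtain ⟨b, hb⟩ := hpar (Fin.last l)
  simp only [Fin.val_zero, Fin.val_last] at hfirst hlast ha hb
  have := i.isLt
  omega

section Sign

variable {R : Type*} [CommRing R] [LinearOrder R] [IsStrictOrderedRing R]

theorem neg_one_pow_card_mul_prod_sub_pos {ι : Type*} [Fintype ι] {t : R} {f : ι → R}
    (hf : ∀ j, t ≠ f j) : 0 < (-1 : R) ^ #{j | t < f j} * ∏ j, (t - f j) := by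
  have habs : (-1 : R) ^ #{j | t < f j} * ∏ j, (t - f j) = ∏ j, |t - f j| := by
    rw [card_filter, ← prod_pow_eq_pow_sum, ← prod_mul_distrib]
    refine prod_congr rfl fun j _ => ?_
    split_ifs with h
    · rw [pow_one, abs_of_neg (sub_neg.2 h)]; ring
    · rw [pow_zero, one_mul, abs_of_nonneg (sub_nonneg.2 (not_lt.1 h))]
  rw [habs]
  exact prod_pos fun j _ => abs_pos.2 (sub_ne_zero.2 (hf j))

theorem even_add_of_neg_one_pow_mul_pos {a b : ℕ} {x : R} (ha : 0 < (-1 : R) ^ a * x)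
    (hb : 0 < (-1 : R) ^ b * x) : Even (a + b) := by
  by_contra hodd
  have hprod := mul_pos ha hb
  rw [show (-1 : R) ^ a * x * ((-1) ^ b * x) = (-1) ^ (a + b) * (x * x) by ring,
    (Nat.not_even_iff_odd.1 hodd).neg_one_pow] at hprod
  nlinarith [mul_self_nonneg x]

theorem StrictlyInterlaces.neg_one_pow_mul_prod_pos {k : ℕ} {ν : Fin k → R}
    {μ : Fin (k + 1) → R} (h : StrictlyInterlaces ν μ) (i : Fin (k + 1)) :
    0 < (-1 : R) ^ (k - i) * ∏ j, (μ i - ν j) := by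
  have hcompare (j : Fin k) : if (i : ℕ) ≤ j then μ i < ν j else ν j < μ i := by
    split_ifs with hij
    · exact (h.strictMono_right.monotone (Fin.le_def.2 hij)).trans_lt (h j).1
    · exact (h j).2.trans_le
        (h.strictMono_right.monotone (Fin.le_def.2 (by rw [Fin.val_succ]; omega)))
  have hne (j : Fin k) : μ i ≠ ν j := by
    have := hcompare j
    split_ifs at this
    exacts [this.ne, this.ne']
  have hcard : #{j | μ i < ν j} = k - i := by
    have hfilter :
        filter (fun j => μ i < ν j) univ = filter (fun j : Fin k => (i : ℕ) ≤ j) univ := by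
      ext j
      have := hcompare j
      split_ifs at this with hij <;> simp [hij, this, not_lt_of_gt]
    simp_rw [hfilter, ← not_lt, filter_not, card_sdiff_of_subset (filter_subset _ _), card_univ,
      Fintype.card_fin, Fin.card_filter_val_lt]
    omega
  simpa only [hcard] using neg_one_pow_card_mul_prod_sub_pos hne

theorem strictlyInterlaces_of_neg_one_pow_mul_prod_pos {k : ℕ} {μ : Fin (k + 1) → R}
    (hμ : StrictMono μ) {ρ : Fin (k + 2) → R} (hρ : Monotone ρ)
    (h : ∀ i : Fin (k + 1), 0 < (-1 : R) ^ (k + 1 - i) * ∏ j, (μ i - ρ j)) :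
    StrictlyInterlaces μ ρ := by
  have hne (i j) : μ i ≠ ρ j := fun hij =>
    (h i).ne' (by rw [prod_eq_zero (mem_univ j) (sub_eq_zero.2 hij), mul_zero])
  have hcount : ∀ i, #{j | μ i < ρ j} = k + 1 - i := by
    refine Fin.eq_sub_of_antitone_of_even (fun i i' hii' => card_le_card ?_)
      (fun i => even_add_of_neg_one_pow_mul_pos
        (neg_one_pow_card_mul_prod_sub_pos (hne i)) (h i))
      ((card_filter_le _ _).trans (by simp))
    exact monotone_filter_right _ fun _ _ => (hμ.monotone hii').trans_lt
  intro i
  constructor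
  · refine lt_of_le_of_ne (not_lt.1 ?_) (hne _ _).symm
    rw [hρ.lt_apply_iff_sub_card_le, hcount, Fin.val_castSucc]
    omega
  · rw [hρ.lt_apply_iff_sub_card_le, hcount, Fin.val_succ]
    omega

end Sign

theorem Matrix.det_succ_succ_of_last_row_col_eq_zero {R : Type*} [CommRing R] {k : ℕ}
    (M : Matrix (Fin (k + 2)) (Fin (k + 2)) R)
    (hrow : ∀ j : Fin k, M (Fin.last _) j.castSucc.castSucc = 0)
    (hcol : ∀ i : Fin k, M i.castSucc.castSucc (Fin.last _) = 0) :
    M.det = M (Fin.last _) (Fin.last _) * (M.submatrix Fin.castSucc Fin.castSucc).det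
      - M (Fin.last _) (Fin.last k).castSucc * M (Fin.last k).castSucc (Fin.last _)
        * (M.submatrix (Fin.castSucc ∘ Fin.castSucc) (Fin.castSucc ∘ Fin.castSucc)).det := by
  have hN : (M.submatrix Fin.castSucc (Fin.last k).castSucc.succAbove).det
      = M (Fin.last k).castSucc (Fin.last _)
        * (M.submatrix (Fin.castSucc ∘ Fin.castSucc) (Fin.castSucc ∘ Fin.castSucc)).det := by
    rw [det_succ_column _ (Fin.last k), Fin.sum_univ_castSucc]
    simp [hcol, Fin.succAbove_of_castSucc_lt, Function.comp_def]
  rw [det_succ_row M (Fin.last _), Fin.sum_univ_castSucc, Fin.sum_univ_castSucc]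
  have h_even : (-1 : R) ^ (k + 1 + (k + 1)) = 1 := Even.neg_one_pow ⟨k + 1, rfl⟩
  have h_odd : (-1 : R) ^ (k + 1 + k) = -1 := Odd.neg_one_pow ⟨k, by ring⟩
  simp only [hrow, Fin.succAbove_last, mul_zero, zero_mul, sum_const_zero, zero_add,
    Fin.val_last, Fin.val_castSucc, h_even, h_odd]
  rw [hN]
  ring

theorem Matrix.charmatrix_submatrix {R m n : Type*} [CommRing R] [DecidableEq m] [Fintype m]
    [DecidableEq n] [Fintype n] (A : Matrix n n R) {e : m → n} (he : Function.Injective e) :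
    charmatrix (A.submatrix e e) = (charmatrix A).submatrix e e := by
  ext i j
  simp [charmatrix_apply, diagonal_apply, he.eq_iff]

theorem Matrix.charpoly_eq_of_isSymm_tridiagonal {R : Type*} [CommRing R] {k : ℕ}
    {A : Matrix (Fin (k + 2)) (Fin (k + 2)) R} (hA : A.IsSymm)
    (htri : ∀ i j : Fin (k + 2), (i : ℕ) + 1 < j → A i j = 0) :
    A.charpoly = (X - C (A (Fin.last _) (Fin.last _)))
        * (A.submatrix Fin.castSucc Fin.castSucc).charpoly
      - C (A (Fin.last k).castSucc (Fin.last _)) ^ 2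
        * (A.submatrix (Fin.castSucc ∘ Fin.castSucc) (Fin.castSucc ∘ Fin.castSucc)).charpoly := by
  have hcol (i : Fin k) : charmatrix A i.castSucc.castSucc (Fin.last _) = 0 := by
    rw [charmatrix_apply_ne _ _ _ (Fin.castSucc_lt_last _).ne, htri _ _ (by simp), C_0, neg_zero]
  have hrow (j : Fin k) : charmatrix A (Fin.last _) j.castSucc.castSucc = 0 := by
    rw [charmatrix_apply_ne _ _ _ (Fin.castSucc_lt_last _).ne', hA.apply, htri _ _ (by simp), C_0,
      neg_zero]
  rw [charpoly, det_succ_succ_of_last_row_col_eq_zero _ hrow hcol, charpoly, charpoly,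
    charmatrix_submatrix _ (Fin.castSucc_injective _),
    charmatrix_submatrix _ ((Fin.castSucc_injective _).comp (Fin.castSucc_injective _)),
    charmatrix_apply_eq, charmatrix_apply_ne _ _ _ (Fin.castSucc_lt_last _).ne',
    charmatrix_apply_ne _ _ _ (Fin.castSucc_lt_last _).ne, hA.apply (Fin.last k).castSucc]
  ring

theorem Monotone.eq_of_prod_X_sub_C_eq {R : Type*} [CommRing R] [IsDomain R] [LinearOrder R]
    {m : ℕ} {f g : Fin m → R} (hf : Monotone f) (hg : Monotone g)
    (h : ∏ i, (X - C (f i)) = ∏ i, (X - C (g i))) : f = g := by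
  have hroots (f : Fin m → R) : (∏ i, (X - C (f i))).roots = univ.val.map f := by
    have := roots_multiset_prod_X_sub_C (univ.val.map f)
    rwa [Multiset.map_map] at this
  have hperm : (List.ofFn f).Perm (List.ofFn g) := by
    rw [← Multiset.coe_eq_coe, ← Fin.univ_val_map, ← Fin.univ_val_map, ← hroots, ← hroots, h]
  exact List.ofFn_injective (hperm.eq_of_sortedLE hf.sortedLE_ofFn hg.sortedLE_ofFn)

theorem Matrix.IsSymm.exists_monotone_charpoly_eq_prod {m : ℕ}
    {A : Matrix (Fin m) (Fin m) ℝ} (hA : A.IsSymm) :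
    ∃ ρ : Fin m → ℝ, Monotone ρ ∧ A.charpoly = ∏ i, (X - C (ρ i)) := by
  have hH : A.IsHermitian := isHermitian_iff_isSymm.2 hA
  refine ⟨hH.eigenvalues ∘ Tuple.sort hH.eigenvalues, Tuple.monotone_sort _, ?_⟩
  rw [hH.charpoly_eq, ← Equiv.prod_comp (Tuple.sort hH.eigenvalues)]
  simp

theorem exists_strictlyInterlaces_charpoly_of_isSymm_tridiagonal {m : ℕ}
    (A : Matrix (Fin (m + 1)) (Fin (m + 1)) ℝ) (hA : A.IsSymm)
    (htri : ∀ i j : Fin (m + 1), (i : ℕ) + 1 < j → A i j = 0)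
    (hb : ∀ i : Fin m, A i.castSucc i.succ ≠ 0) :
    ∃ (ν : Fin m → ℝ) (μ : Fin (m + 1) → ℝ),
      (A.submatrix Fin.castSucc Fin.castSucc).charpoly = ∏ i, (X - C (ν i)) ∧
      A.charpoly = ∏ i, (X - C (μ i)) ∧ StrictlyInterlaces ν μ := by
  induction m with
  | zero =>
    refine ⟨Fin.elim0, ![A 0 0], ?_, ?_, fun i => i.elim0⟩
    · simp [charpoly, det_fin_zero]
    · rw [charpoly, det_fin_one, charmatrix_apply_eq, Fin.prod_univ_one]
      rfl
  | succ m ih =>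
    obtain ⟨ν, μ, hν, hμ, hνμ⟩ := ih (A.submatrix Fin.castSucc Fin.castSucc) (hA.submatrix _)
      (fun i j hij => htri _ _ hij)
      (fun i => by simpa only [submatrix_apply, Fin.succ_castSucc] using hb i.castSucc)
    obtain ⟨ρ, hρ, hρA⟩ := hA.exists_monotone_charpoly_eq_prod
    refine ⟨μ, ρ, hμ, hρA, strictlyInterlaces_of_neg_one_pow_mul_prod_pos hνμ.strictMono_right hρ
      fun i => ?_⟩
    set b := A (Fin.last m).castSucc (Fin.last (m + 1))
    have hb_ne : b ≠ 0 := by simpa only [Fin.succ_last] using hb (Fin.last m)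
    have heval := congrArg (eval (μ i)) (charpoly_eq_of_isSymm_tridiagonal hA htri)
    rw [submatrix_submatrix] at hν
    simp only [hρA, hμ, hν, eval_prod, eval_sub, eval_mul, eval_X, eval_C, eval_pow] at heval
    rw [prod_eq_zero (mem_univ i) (sub_self _), mul_zero, zero_sub] at heval
    calc 0 < b ^ 2 * ((-1) ^ (m - i) * ∏ j, (μ i - ν j)) :=
          mul_pos (sq_pos_of_ne_zero hb_ne) (hνμ.neg_one_pow_mul_prod_pos i)
      _ = (-1) ^ (m + 1 - i) * ∏ j, (μ i - ρ j) := by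
          rw [heval, show m + 1 - (i : ℕ) = m - i + 1 by omega, pow_succ]
          ring

/-- Strong Cauchy interlacing law for tridiagonal matrices.
Let `A` be an `(n+1)×(n+1)` real symmetric tridiagonal matrix whose off-diagonal
entries `A_{i,i+1}` are all nonzero.  Let `λ_1 ≤ ⋯ ≤ λ_{n+1}` be the eigenvalues of `A`
counted with multiplicity (monotone `lam` with `charpoly A = ∏ (X − λ_i)`) and let
`η_1 ≤ ⋯ ≤ η_n` be the eigenvalues of the leading principal `n×n` submatrix, counted
with multiplicity.  Then the interlacing is strict:
`λ_1 < η_1 < λ_2 < η_2 < ⋯ < λ_n < η_n < λ_{n+1}`. -/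
theorem strong_cauchy_interlacing {n : ℕ}
    (A : Matrix (Fin (n + 1)) (Fin (n + 1)) ℝ)
    (hsymm : A.IsSymm)
    (htri : ∀ i j : Fin (n + 1), (i : ℕ) + 1 < (j : ℕ) → A i j = 0)
    (hb : ∀ i : Fin n, A i.castSucc i.succ ≠ 0)
    (lam : Fin (n + 1) → ℝ) (eta : Fin n → ℝ)
    (hlam_mono : Monotone lam) (heta_mono : Monotone eta)
    (hlam : A.charpoly = ∏ i, (Polynomial.X - Polynomial.C (lam i)))
    (heta : (A.submatrix Fin.castSucc Fin.castSucc).charpoly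
        = ∏ i, (Polynomial.X - Polynomial.C (eta i))) :
    ∀ i : Fin n, lam i.castSucc < eta i ∧ eta i < lam i.succ := by
  obtain ⟨ν, μ, hν, hμ, hνμ⟩ :=
    exists_strictlyInterlaces_charpoly_of_isSymm_tridiagonal A hsymm htri hb
  obtain rfl : lam = μ :=
    hlam_mono.eq_of_prod_X_sub_C_eq hνμ.strictMono_right.monotone (hlam.symm.trans hμ)
  obtain rfl : eta = ν :=
    heta_mono.eq_of_prod_X_sub_C_eq hνμ.strictMono_left.monotone (heta.symm.trans hν)
  exact hνμ
end

section
/- Let A be an N×N matrix over a commutative ring with N ≥ 2 and let f(λ) = det(λ I_N − A) be its characteristic polynomial. Then the second derivative of f satisfies f''(λ) = 2 · ∑_{1 ≤ k < ℓ ≤ N} det( (λ I_N − A)_{kℓ|kℓ} ) = 2 · ∑_{1 ≤ k < ℓ ≤ N} det( λ I_{N−2} − A_{kℓ|kℓ} ). -/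
open Polynomial Finset

namespace Matrix

variable {R : Type*} [CommRing R]

theorem derivative_det {n : Type*} [Fintype n] [DecidableEq n] (M : Matrix n n R[X]) :
    derivative M.det = ∑ i, (M.updateCol i fun k => derivative (M k i)).det := by
  simp_rw [det_apply', map_sum, derivative_mul, derivative_intCast, zero_mul, zero_add,
    derivative_prod_finset, mul_sum]
  rw [sum_comm]
  refine sum_congr rfl fun i _ => sum_congr rfl fun σ _ => ?_
  have hcol : (fun j => M.updateCol i (fun k => derivative (M k i)) (σ j) j)
      = Function.update (fun j => M (σ j) j) i (derivative (M (σ i) i)) := by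
    ext j
    rcases eq_or_ne j i with rfl | hj <;> simp [*]
  rw [hcol, prod_update_of_mem (mem_univ i), sdiff_singleton_eq_erase, mul_comm (derivative _)]

theorem map_derivative_charmatrix {n : Type*} [Fintype n] [DecidableEq n] (A : Matrix n n R) :
    (charmatrix A).map derivative = 1 := by
  ext i j
  rcases eq_or_ne i j with rfl | h <;> simp [charmatrix_apply_ne, one_apply_ne, *]

theorem charmatrix_submatrix_s6 {n m : Type*} [Fintype n] [DecidableEq n] [Fintype m] [DecidableEq m]
    (A : Matrix n n R) {f : m → n} (hf : Function.Injective f) :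
    (charmatrix A).submatrix f f = charmatrix (A.submatrix f f) := by
  ext a b
  rcases eq_or_ne a b with rfl | h
  · simp
  · simp [charmatrix_apply_ne _ _ _ h, charmatrix_apply_ne _ _ _ (hf.ne h)]

theorem det_updateCol_single_self {m : ℕ} (M : Matrix (Fin (m + 1)) (Fin (m + 1)) R)
    (i : Fin (m + 1)) :
    (M.updateCol i (Pi.single i 1)).det = (M.submatrix i.succAbove i.succAbove).det := by
  rw [det_succ_column _ i, Fintype.sum_eq_single i fun k hk => by
    rw [updateCol_self, Pi.single_eq_of_ne hk, mul_zero, zero_mul]]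
  rw [updateCol_self, Pi.single_eq_same, submatrix_updateCol_succAbove, ← two_mul,
    pow_mul, neg_one_sq, one_pow, one_mul, one_mul]

theorem derivative_charpoly {m : ℕ} (A : Matrix (Fin (m + 1)) (Fin (m + 1)) R) :
    derivative A.charpoly
      = ∑ i : Fin (m + 1), (A.submatrix i.succAbove i.succAbove).charpoly := by
  rw [charpoly, derivative_det]
  refine sum_congr rfl fun i _ => ?_
  have hcol : (fun k => derivative (charmatrix A k i)) = Pi.single i 1 := by
    ext k
    rw [← map_apply (f := derivative), map_derivative_charmatrix, one_apply, Pi.single_apply]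
  rw [hcol, det_updateCol_single_self, charmatrix_submatrix_s6 _ (Fin.succAbove_right_injective)]
  rfl

end Matrix

theorem Fin.sum_sum_succAbove {M : Type*} [AddCommMonoid M] {n : ℕ}
    (f : Fin (n + 1) → Fin (n + 1) → M) :
    ∑ i, ∑ j : Fin n, f i (i.succAbove j)
      = ∑ p ∈ univ.filter (fun p : Fin (n + 1) × Fin (n + 1) => p.1 ≠ p.2), f p.1 p.2 := by
  rw [sum_filter, Fintype.sum_prod_type]
  refine sum_congr rfl fun i _ => ?_
  rw [← sum_filter, filter_ne, ← compl_singleton, ← Fin.image_succAbove_univ,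
    sum_image fun _ _ _ _ h => Fin.succAbove_right_injective h]

theorem Finset.sum_filter_ne_eq_sum_filter_lt {ι M : Type*} [Fintype ι] [LinearOrder ι]
    [AddCommMonoid M] (f : ι → ι → M) :
    ∑ p ∈ univ.filter (fun p : ι × ι => p.1 ≠ p.2), f p.1 p.2
      = ∑ p ∈ univ.filter (fun p : ι × ι => p.1 < p.2), (f p.1 p.2 + f p.2 p.1) := by
  have hsplit : univ.filter (fun p : ι × ι => p.1 ≠ p.2)
      = univ.filter (fun p => p.1 < p.2) ∪ univ.filter (fun p => p.2 < p.1) := by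
    ext p
    simp only [mem_filter, mem_union, mem_univ, true_and]
    exact ne_iff_lt_or_gt
  have hdisj : Disjoint (univ.filter (fun p : ι × ι => p.1 < p.2))
      (univ.filter (fun p => p.2 < p.1)) :=
    disjoint_filter.mpr fun p _ h => h.not_gt
  rw [hsplit, sum_union hdisj, sum_add_distrib]
  congr 1
  exact sum_equiv (Equiv.prodComm ι ι) (by simp) (by simp)

theorem Fin.succAbove_comp_succAbove_eq_skipTwo {n : ℕ} (i : Fin (n + 2)) (j : Fin (n + 1)) :
    i.succAbove ∘ j.succAbove = skipTwo (min i (i.succAbove j)) (max i (i.succAbove j)) := by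
  funext r
  apply Fin.ext
  simp only [Function.comp_apply, Fin.succAbove, skipTwo, min_def, max_def, Fin.le_def, Fin.lt_def]
  split_ifs <;> simp only [Fin.val_castSucc, Fin.val_succ] at * <;> omega

/-- For an `N×N` matrix `A` (`N ≥ 2`) over a commutative ring with
characteristic polynomial `f(λ) = det(λ I − A)`, the second derivative satisfies
`f''(λ) = 2 ∑_{k<ℓ} det(λ I_{N−2} − A_{kℓ|kℓ})`, i.e. twice the sum over pairs
`k < ℓ` of the characteristic polynomials of the doubly-deleted principal minors
`A_{kℓ|kℓ}`. -/
theorem derivative_sq_charpoly_eq_two_mul_sum_double_minor_charpolys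
    {R : Type*} [CommRing R] {n : ℕ}
    (A : Matrix (Fin (n + 2)) (Fin (n + 2)) R) :
    Polynomial.derivative (Polynomial.derivative A.charpoly)
      = 2 * ∑ p ∈ Finset.univ.filter (fun p : Fin (n + 2) × Fin (n + 2) => p.1 < p.2),
          (A.submatrix (skipTwo p.1 p.2) (skipTwo p.1 p.2)).charpoly := by
  set g : Fin (n + 2) → Fin (n + 2) → R[X] := fun k l =>
    (A.submatrix (skipTwo (min k l) (max k l)) (skipTwo (min k l) (max k l))).charpoly
  calc derivative (derivative A.charpoly)
      = ∑ i, ∑ j : Fin (n + 1), g i (i.succAbove j) := by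
        simp only [Matrix.derivative_charpoly, map_sum, Matrix.submatrix_submatrix,
          Fin.succAbove_comp_succAbove_eq_skipTwo, g]
    _ = ∑ p ∈ univ.filter (fun p : Fin (n + 2) × Fin (n + 2) => p.1 < p.2),
          (g p.1 p.2 + g p.2 p.1) := by
        rw [Fin.sum_sum_succAbove, Finset.sum_filter_ne_eq_sum_filter_lt]
    _ = _ := by
        rw [mul_sum]
        refine sum_congr rfl fun p hp => ?_
        have hlt : p.1 < p.2 := (mem_filter.mp hp).2
        simp only [g, min_comm p.2, max_comm p.2, min_eq_left hlt.le, max_eq_right hlt.le, two_mul]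
end

section
/- Let H be an N×N real symmetric tridiagonal matrix with N ≥ 2, let λ ∈ ℝ, and set M = λ I_N − H and f(λ) = det(M). Then the following identity holds: ( ∑_{k=1}^N det(M_{k|k}) )² − ∑_{k=1}^N det(M_{k|k})² − 2 ∑_{k=1}^{N−1} det(M_{k|k+1})² = 2 · f(λ) · ∑_{k=1}^{N−1} det(M_{k,k+1|k,k+1}) + 2 ∑_{1 ≤ k < ℓ ≤ N, ℓ−k > 1} det(M_{k|k}) · det(M_{ℓ|ℓ}). -/
/-!
Expanding the square of `∑ₖ det M_{k|k}`, the diagonal terms cancel against `∑ₖ det(M_{k|k})²` and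
the cross terms split into adjacent pairs `(k, k+1)` and the rest. For an adjacent pair the
Desnanot–Jacobi identity
`det M · det M_{k,k+1|k,k+1} = det M_{k|k} det M_{k+1|k+1} − det M_{k|k+1} det M_{k+1|k}`,
together with `det M_{k+1|k} = det M_{k|k+1}` (symmetry of `M`), turns the product
`det M_{k|k} det M_{k+1|k+1}` into `f(λ) det M_{k,k+1|k,k+1} + det(M_{k|k+1})²`.

Desnanot–Jacobi: if `P` is the identity with columns `i, j` replaced by those of `adj A`, then
`A P` has columns `det A • eᵢ, det A • eⱼ`, so `det (A P) = (det A)² det A_{ij|ij}`, while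
`det P` is the `2 × 2` minor of `adj A` on `{i, j}`. The common factor `det A` is cancelled on the
generic matrix over `ℤ[Xᵢⱼ]`, whose determinant is a nonzero polynomial.
-/

open Finset Matrix

namespace Matrix

variable {R : Type*} [CommRing R]

theorem det_updateCol_single_self_s10 {m : ℕ} (B : Matrix (Fin (m + 1)) (Fin (m + 1)) R)
    (c : Fin (m + 1)) :
    (B.updateCol c (Pi.single c 1)).det = (B.submatrix c.succAbove c.succAbove).det := by
  rw [det_succ_column _ c, Finset.sum_eq_single c (fun i _ hi => by simp [hi]) (by simp)]
  simp [submatrix_updateCol_succAbove]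

theorem submatrix_succAbove_updateCol_single {n : ℕ} (A : Matrix (Fin (n + 2)) (Fin (n + 2)) R)
    (i : Fin (n + 2)) (j : Fin (n + 1)) :
    (A.updateCol (i.succAbove j) (Pi.single (i.succAbove j) 1)).submatrix i.succAbove i.succAbove
      = (A.submatrix i.succAbove i.succAbove).updateCol j (Pi.single j 1) := by
  ext r c
  simp [updateCol_apply, Pi.single_apply]

theorem det_updateCol_single_updateCol_single {n : ℕ} (A : Matrix (Fin (n + 2)) (Fin (n + 2)) R)
    (i : Fin (n + 2)) (j : Fin (n + 1)) :
    ((A.updateCol (i.succAbove j) (Pi.single (i.succAbove j) 1)).updateCol i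
      (Pi.single i 1)).det
      = (A.submatrix (i.succAbove ∘ j.succAbove) (i.succAbove ∘ j.succAbove)).det := by
  rw [det_updateCol_single_self_s10, submatrix_succAbove_updateCol_single,
    det_updateCol_single_self_s10, submatrix_submatrix]

theorem mulVec_adjugate_col {ι : Type*} [Fintype ι] [DecidableEq ι] (A : Matrix ι ι R) (c : ι) :
    A *ᵥ (fun x => A.adjugate x c) = A.det • Pi.single c 1 := by
  ext i
  simpa [mulVec, dotProduct, mul_apply, one_apply, Pi.single_apply, eq_comm] using
    congr_fun₂ (mul_adjugate A) i c

theorem det_one_updateCol_updateCol {ι : Type*} [Fintype ι] [DecidableEq ι] {a b : ι}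
    (hab : a ≠ b) (u v : ι → R) :
    (((1 : Matrix ι ι R).updateCol b v).updateCol a u).det = u a * v b - u b * v a := by
  -- a rank-two perturbation `1 + U V` of the identity; `det (1 + U V) = det (1 + V U)` is `2 × 2`
  have hP : ((1 : Matrix ι ι R).updateCol b v).updateCol a u =
      1 + (of fun i => ![u i - if i = a then 1 else 0, v i - if i = b then 1 else 0]) *
        of ![fun j => if a = j then (1 : R) else 0, fun j => if b = j then 1 else 0] := by
    ext i j
    obtain rfl | hja := eq_or_ne j a
    · simp [mul_apply, one_apply, hab.symm]
    obtain rfl | hjb := eq_or_ne j b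
    · simp [mul_apply, one_apply, hab, hja]
    · simp [mul_apply, one_apply, hja, hjb, hja.symm, hjb.symm]
  rw [hP, det_one_add_mul_comm, det_fin_two]
  simp [vecMul, dotProduct, hab, hab.symm]
  ring

theorem det_mul_det_mul_det_submatrix_succAbove_comp {n : ℕ}
    (A : Matrix (Fin (n + 2)) (Fin (n + 2)) R) (i : Fin (n + 2)) (j : Fin (n + 1)) :
    A.det * (A.det * (A.submatrix (i.succAbove ∘ j.succAbove) (i.succAbove ∘ j.succAbove)).det)
      = A.det * ((A.submatrix i.succAbove i.succAbove).det
            * (A.submatrix (i.succAbove j).succAbove (i.succAbove j).succAbove).det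
          - (A.submatrix i.succAbove (i.succAbove j).succAbove).det
            * (A.submatrix (i.succAbove j).succAbove i.succAbove).det) := by
  set S := i.succAbove ∘ j.succAbove
  set i' := i.succAbove j
  have hne : i ≠ i' := (Fin.succAbove_ne i j).symm
  have hAP : A * ((1 : Matrix _ _ R).updateCol i' (fun x => A.adjugate x i')).updateCol i
      (fun x => A.adjugate x i)
      = (A.updateCol i' (A.det • Pi.single i' 1)).updateCol i (A.det • Pi.single i 1) := by
    rw [mul_updateCol, mul_updateCol, mul_one, mulVec_adjugate_col, mulVec_adjugate_col]
  have hQ : ((A.updateCol i' (A.det • Pi.single i' 1)).updateCol i (A.det • Pi.single i 1)).det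
      = A.det * (A.det * (A.submatrix S S).det) := by
    rw [det_updateCol_smul, updateCol_comm _ hne.symm, det_updateCol_smul, updateCol_comm _ hne,
      det_updateCol_single_updateCol_single]
  have hsign : ((-1 : R) ^ ((i : ℕ) + i')) * (-1) ^ ((i' : ℕ) + i) = 1 := by
    rw [← pow_add, Even.neg_one_pow ⟨(i : ℕ) + i', by ring⟩]
  have hdiag (k : Fin (n + 2)) : (-1 : R) ^ ((k : ℕ) + k) = 1 := Even.neg_one_pow ⟨k, rfl⟩
  rw [← hQ, ← hAP, det_mul, det_one_updateCol_updateCol hne]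
  simp only [adjugate_fin_succ_eq_det_submatrix, hdiag, one_mul]
  linear_combination -(A.det * (A.submatrix i.succAbove i'.succAbove).det
    * (A.submatrix i'.succAbove i.succAbove).det) * hsign

theorem det_mul_det_submatrix_succAbove_comp {n : ℕ}
    (A : Matrix (Fin (n + 2)) (Fin (n + 2)) R) (i : Fin (n + 2)) (j : Fin (n + 1)) :
    A.det * (A.submatrix (i.succAbove ∘ j.succAbove) (i.succAbove ∘ j.succAbove)).det
      = (A.submatrix i.succAbove i.succAbove).det
            * (A.submatrix (i.succAbove j).succAbove (i.succAbove j).succAbove).det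
          - (A.submatrix i.succAbove (i.succAbove j).succAbove).det
            * (A.submatrix (i.succAbove j).succAbove i.succAbove).det := by
  have generic := mul_left_cancel₀ (det_mvPolynomialX_ne_zero (Fin (n + 2)) ℤ)
    (det_mul_det_mul_det_submatrix_succAbove_comp
      (mvPolynomialX (Fin (n + 2)) (Fin (n + 2)) ℤ) i j)
  have specialized :=
    congrArg (MvPolynomial.eval₂Hom (Int.castRingHom R) fun p => A p.1 p.2) generic
  simpa only [map_mul, map_sub, RingHom.map_det, RingHom.mapMatrix_apply, ← submatrix_map,
    MvPolynomial.coe_eval₂Hom, mvPolynomialX_map_eval₂] using specialized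

theorem IsSymm.det_submatrix_comm {ι κ : Type*} [Fintype κ] [DecidableEq κ] {A : Matrix ι ι R}
    (hA : A.IsSymm) (r c : κ → ι) : (A.submatrix r c).det = (A.submatrix c r).det := by
  rw [← det_transpose, transpose_submatrix, hA.eq]

end Matrix

theorem skipTwo_castSucc_succ {n : ℕ} (k : Fin (n + 1)) :
    skipTwo k.castSucc k.succ = k.castSucc.succAbove ∘ k.succAbove := by
  funext r
  ext
  simp only [skipTwo, Function.comp_apply, Fin.succAbove, Fin.lt_def]
  split_ifs <;> simp_all <;> omega

theorem sq_sum_eq_sum_sq_add_two_mul_sum_lt {ι R : Type*} [Fintype ι] [LinearOrder ι]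
    [CommSemiring R] (f : ι → R) :
    (∑ i, f i) ^ 2
      = ∑ i, f i ^ 2 + 2 * ∑ p ∈ univ.filter (fun p : ι × ι => p.1 < p.2), f p.1 * f p.2 := by
  have hswap : ∑ p ∈ univ.filter (fun p : ι × ι => p.2 < p.1), f p.1 * f p.2
      = ∑ p ∈ univ.filter (fun p : ι × ι => p.1 < p.2), f p.1 * f p.2 :=
    sum_equiv (Equiv.prodComm ι ι) (by simp) (by simp [mul_comm])
  have htrich (p : ι × ι) : f p.1 * f p.2 = (if p.1 = p.2 then f p.1 * f p.2 else 0)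
      + (if p.1 < p.2 then f p.1 * f p.2 else 0) + (if p.2 < p.1 then f p.1 * f p.2 else 0) := by
    rcases lt_trichotomy p.1 p.2 with h | h | h
    · simp [h, h.ne, h.not_gt]
    · simp [h]
    · simp [h, h.ne', h.not_gt]
  rw [sq, sum_mul_sum, ← Fintype.sum_prod_type', sum_congr rfl fun p _ => htrich p,
    sum_add_distrib, sum_add_distrib]
  simp only [← sum_filter, hswap]
  have hdiag : ∑ p ∈ univ.filter (fun p : ι × ι => p.1 = p.2), f p.1 * f p.2 = ∑ i, f i ^ 2 := by
    simp [sum_filter, Fintype.sum_prod_type, sq]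
  rw [hdiag]
  ring

theorem Fin.sum_filter_lt_eq_sum_castSucc_succ_add {M : Type*} [AddCommMonoid M] {n : ℕ}
    (g : Fin (n + 1) × Fin (n + 1) → M) :
    ∑ p ∈ univ.filter (fun p : Fin (n + 1) × Fin (n + 1) => p.1 < p.2), g p
      = ∑ k : Fin n, g (k.castSucc, k.succ)
        + ∑ p ∈ univ.filter (fun p : Fin (n + 1) × Fin (n + 1) => (p.1 : ℕ) + 1 < p.2), g p := by
  rw [← sum_filter_add_sum_filter_not _ (fun p => (p.1 : ℕ) + 1 < p.2), add_comm, filter_filter,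
    filter_filter]
  congr 1
  · symm
    refine sum_nbij (fun k => (k.castSucc, k.succ)) ?_ ?_ ?_ (fun _ _ => rfl)
    · intro k _
      simp
    · intro k _ l _ h
      simpa using h
    · rintro ⟨a, b⟩ h
      simp only [coe_filter, mem_univ, true_and, Set.mem_ofPred_eq, Fin.lt_def, not_lt] at h
      refine ⟨⟨a, by omega⟩, by simp, ?_⟩
      ext <;> simp; omega
  · refine sum_congr (filter_congr fun p _ => ?_) fun _ _ => rfl
    simp only [Fin.lt_def]
    omega

theorem tridiagonal_minor_det_identity_general {n : ℕ}
    (H : Matrix (Fin (n + 2)) (Fin (n + 2)) ℝ)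
    (hsymm : H.IsSymm)
    (lam : ℝ)
    (M : Matrix (Fin (n + 2)) (Fin (n + 2)) ℝ)
    (hM : M = lam • (1 : Matrix (Fin (n + 2)) (Fin (n + 2)) ℝ) - H) :
    (∑ k : Fin (n + 2), (M.submatrix k.succAbove k.succAbove).det) ^ 2
      - ∑ k : Fin (n + 2), (M.submatrix k.succAbove k.succAbove).det ^ 2
      - 2 * ∑ k : Fin (n + 1), (M.submatrix (k.castSucc).succAbove (k.succ).succAbove).det ^ 2
    = 2 * M.det *
        ∑ k : Fin (n + 1),
          (M.submatrix (skipTwo k.castSucc k.succ) (skipTwo k.castSucc k.succ)).det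
      + 2 * ∑ p ∈ Finset.univ.filter
            (fun p : Fin (n + 2) × Fin (n + 2) => (p.1 : ℕ) + 1 < (p.2 : ℕ)),
          (M.submatrix p.1.succAbove p.1.succAbove).det
            * (M.submatrix p.2.succAbove p.2.succAbove).det := by
  have hMsymm : M.IsSymm := hM ▸ (isSymm_one.smul lam).sub hsymm
  have hadjacent (k : Fin (n + 1)) :
      (M.submatrix k.castSucc.succAbove k.castSucc.succAbove).det
          * (M.submatrix k.succ.succAbove k.succ.succAbove).det
        - (M.submatrix k.castSucc.succAbove k.succ.succAbove).det ^ 2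
      = M.det * (M.submatrix (skipTwo k.castSucc k.succ) (skipTwo k.castSucc k.succ)).det := by
    rw [skipTwo_castSucc_succ, det_mul_det_submatrix_succAbove_comp, Fin.succAbove_castSucc_self,
      hMsymm.det_submatrix_comm k.succ.succAbove k.castSucc.succAbove]
    ring
  have hcondensed : M.det * ∑ k : Fin (n + 1),
        (M.submatrix (skipTwo k.castSucc k.succ) (skipTwo k.castSucc k.succ)).det
      = ∑ k : Fin (n + 1), (M.submatrix k.castSucc.succAbove k.castSucc.succAbove).det
          * (M.submatrix k.succ.succAbove k.succ.succAbove).det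
        - ∑ k : Fin (n + 1), (M.submatrix k.castSucc.succAbove k.succ.succAbove).det ^ 2 := by
    rw [mul_sum, ← sum_sub_distrib]
    exact sum_congr rfl fun k _ => (hadjacent k).symm
  rw [sq_sum_eq_sum_sq_add_two_mul_sum_lt, Fin.sum_filter_lt_eq_sum_castSucc_succ_add, mul_assoc,
    hcondensed]
  ring

/-- Let `H` be an `N×N` real symmetric tridiagonal matrix (`N ≥ 2`),
`λ ∈ ℝ`, `M = λ I − H`, and `f(λ) = det M`.  Then
`(∑_k det M_{k|k})² − ∑_k det(M_{k|k})² − 2 ∑_{k=1}^{N−1} det(M_{k|k+1})²`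
`= 2 f(λ) ∑_{k=1}^{N−1} det(M_{k,k+1|k,k+1}) + 2 ∑_{ℓ−k>1} det(M_{k|k}) det(M_{ℓ|ℓ})`. -/
theorem tridiagonal_minor_det_identity {n : ℕ}
    (H : Matrix (Fin (n + 2)) (Fin (n + 2)) ℝ)
    (hsymm : H.IsSymm)
    (htri : ∀ i j : Fin (n + 2), (i : ℕ) + 1 < (j : ℕ) → H i j = 0)
    (lam : ℝ)
    (M : Matrix (Fin (n + 2)) (Fin (n + 2)) ℝ)
    (hM : M = lam • (1 : Matrix (Fin (n + 2)) (Fin (n + 2)) ℝ) - H) :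
    (∑ k : Fin (n + 2), (M.submatrix k.succAbove k.succAbove).det) ^ 2
      - ∑ k : Fin (n + 2), (M.submatrix k.succAbove k.succAbove).det ^ 2
      - 2 * ∑ k : Fin (n + 1), (M.submatrix (k.castSucc).succAbove (k.succ).succAbove).det ^ 2
    = 2 * M.det *
        ∑ k : Fin (n + 1),
          (M.submatrix (skipTwo k.castSucc k.succ) (skipTwo k.castSucc k.succ)).det
      + 2 * ∑ p ∈ Finset.univ.filter
            (fun p : Fin (n + 2) × Fin (n + 2) => (p.1 : ℕ) + 1 < (p.2 : ℕ)),
          (M.submatrix p.1.succAbove p.1.succAbove).det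
            * (M.submatrix p.2.succAbove p.2.succAbove).det :=
  tridiagonal_minor_det_identity_general H hsymm lam M hM
end

section
/- Let H be an N×N real symmetric matrix with N ≥ 2, let λ ∈ ℝ be an eigenvalue of H, and set M = λ I_N − H. Then for all indices k < ℓ in {1, …, N}: det(M_{k|k}) · det(M_{ℓ|ℓ}) = det(M_{k|ℓ})²; in particular det(M_{k|k}) · det(M_{ℓ|ℓ}) ≥ 0. -/
/-- If `M` has a nonzero kernel vector `w` vanishing at the column index `c`, then the
minor obtained by deleting row `r` and column `c` has zero determinant. -/
lemma minor_det_zero_of_ker_vec {n : ℕ}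
    (M : Matrix (Fin (n + 2)) (Fin (n + 2)) ℝ) (w : Fin (n + 2) → ℝ)
    (hw : w ≠ 0) (hker : M.mulVec w = 0) (r c : Fin (n + 2)) (hc : w c = 0) :
    (M.submatrix r.succAbove c.succAbove).det = 0 := by
  rw [← Matrix.exists_mulVec_eq_zero_iff]
  refine ⟨fun j => w (c.succAbove j), ?_, ?_⟩
  · intro h0
    apply hw
    ext x
    by_cases hx : x = c
    · simpa [hx] using hc
    · obtain ⟨z, rfl⟩ := Fin.exists_succAbove_eq (Ne.symm (Ne.symm hx))
      simpa using congrFun h0 z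
  · ext i
    have hm : M.mulVec w (r.succAbove i) = 0 := by rw [hker]; rfl
    have : ∑ x, M (r.succAbove i) x * w x = 0 := by
      simpa [Matrix.mulVec, dotProduct] using hm
    rw [Fin.sum_univ_succAbove (fun x => M (r.succAbove i) x * w x) c] at this
    simp only [hc, mul_zero, zero_add] at this
    simpa [Matrix.mulVec, dotProduct, Matrix.submatrix_apply] using this

/-- Let `H` be an `N×N` real symmetric matrix (`N ≥ 2`), let `λ` be an
eigenvalue of `H` (i.e. `det(λ I − H) = 0`), and set `M = λ I − H`.  Then for all
`k < ℓ`: `det(M_{k|k}) · det(M_{ℓ|ℓ}) = det(M_{k|ℓ})²`; in particular the product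
`det(M_{k|k}) · det(M_{ℓ|ℓ})` is nonnegative. -/
theorem symm_eigen_minor_product_sq {n : ℕ}
    (H : Matrix (Fin (n + 2)) (Fin (n + 2)) ℝ)
    (hsymm : H.IsSymm)
    (lam : ℝ)
    (M : Matrix (Fin (n + 2)) (Fin (n + 2)) ℝ)
    (hM : M = lam • (1 : Matrix (Fin (n + 2)) (Fin (n + 2)) ℝ) - H)
    (hev : M.det = 0)
    (k l : Fin (n + 2)) (hkl : k < l) :
    (M.submatrix k.succAbove k.succAbove).det * (M.submatrix l.succAbove l.succAbove).det
        = (M.submatrix k.succAbove l.succAbove).det ^ 2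
      ∧ 0 ≤ (M.submatrix k.succAbove k.succAbove).det
          * (M.submatrix l.succAbove l.succAbove).det := by
  have hMsymm : M.transpose = M := by
    rw [hM]
    simp [Matrix.transpose_sub, Matrix.transpose_smul, hsymm.eq]
  -- the key equality; nonnegativity follows by `sq_nonneg`
  have main : (M.submatrix k.succAbove k.succAbove).det
      * (M.submatrix l.succAbove l.succAbove).det
      = (M.submatrix k.succAbove l.succAbove).det ^ 2 := by
    obtain ⟨v, hv0, hvker⟩ := (Matrix.exists_mulVec_eq_zero_iff).mpr hev
    by_cases hcase : ∀ u, M.mulVec u = 0 → ∃ c : ℝ, u = c • v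
    · -- kernel is spanned by `v`: columns of the adjugate are multiples of `v`
      set A := M.adjugate with hAdef
      have hMA : M * A = 0 := by
        rw [hAdef, Matrix.mul_adjugate, hev, zero_smul]
      have hcol : ∀ j, M.mulVec (fun i => A i j) = 0 := by
        intro j
        ext i
        have := congrFun (congrFun hMA i) j
        simpa [Matrix.mul_apply, Matrix.mulVec, dotProduct] using this
      choose c hc using fun j => hcase _ (hcol j)
      have hA : ∀ i j, A i j = c j * v i := by
        intro i j
        have := congrFun (hc j) i
        simpa using this
      have key : A k k * A l l = A k l * A l k := by
        rw [hA k k, hA l l, hA k l, hA l k]; ring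
      -- translate adjugate entries to minors
      have e1 : A k k = (M.submatrix k.succAbove k.succAbove).det := by
        rw [hAdef, Matrix.adjugate_fin_succ_eq_det_submatrix]
        rw [(Even.add_self (k : ℕ)).neg_one_pow, one_mul]
      have e2 : A l l = (M.submatrix l.succAbove l.succAbove).det := by
        rw [hAdef, Matrix.adjugate_fin_succ_eq_det_submatrix]
        rw [(Even.add_self (l : ℕ)).neg_one_pow, one_mul]
      have etr : (M.submatrix l.succAbove k.succAbove).det
          = (M.submatrix k.succAbove l.succAbove).det := by
        rw [← Matrix.det_transpose]
        congr 1
        ext i j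
        simp only [Matrix.transpose_apply, Matrix.submatrix_apply]
        conv_lhs => rw [← hMsymm]
        rfl
      have e3 : A k l * A l k = (M.submatrix k.succAbove l.succAbove).det ^ 2 := by
        rw [hAdef, Matrix.adjugate_fin_succ_eq_det_submatrix,
          Matrix.adjugate_fin_succ_eq_det_submatrix, etr]
        have hsign : ((-1 : ℝ)) ^ ((l : ℕ) + k) * (-1 : ℝ) ^ ((k : ℕ) + l) = 1 := by
          rw [← pow_add]
          exact Even.neg_one_pow ⟨(k : ℕ) + l, by ring⟩
        ring_nf
        ring_nf at hsign
        nlinarith [hsign, sq_nonneg ((M.submatrix k.succAbove l.succAbove).det)]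
      rw [← e1, ← e2, key, e3]
    · -- kernel has dimension ≥ 2: all relevant minors vanish
      push_neg at hcase
      obtain ⟨u, huker, hu⟩ := hcase
      have hex : ∀ a : Fin (n + 2), ∃ w, w ≠ 0 ∧ M.mulVec w = 0 ∧ w a = 0 := by
        intro a
        by_cases h0 : (u a) • v - (v a) • u = 0
        · refine ⟨u, ?_, huker, ?_⟩
          · intro h; exact hu 0 (by simp [h])
          · by_cases hva : v a = 0
            · have : (u a) • v = 0 := by
                have := h0; rw [hva, zero_smul, sub_zero] at this; exact this
              rcases smul_eq_zero.mp this with h | h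
              · exact h
              · exact absurd h hv0
            · exfalso
              apply hu (u a / v a)
              have hsv : (u a) • v = (v a) • u := by rwa [sub_eq_zero] at h0
              ext i
              have hsvi := congrFun hsv i
              simp only [Pi.smul_apply, smul_eq_mul] at hsvi ⊢
              field_simp
              linear_combination -hsvi
        · refine ⟨(u a) • v - (v a) • u, h0, ?_, by simp [mul_comm]⟩
          rw [Matrix.mulVec_sub, Matrix.mulVec_smul, Matrix.mulVec_smul, hvker, huker]
          simp
      obtain ⟨w1, hw1, hw1k, hw1ka⟩ := hex k
      obtain ⟨w2, hw2, hw2k, hw2ka⟩ := hex l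
      rw [minor_det_zero_of_ker_vec M w1 hw1 hw1k k k hw1ka,
        minor_det_zero_of_ker_vec M w2 hw2 hw2k k l hw2ka]
      ring
  exact ⟨main, main ▸ sq_nonneg _⟩
end
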